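/- arXiv:2501.02218 — 6 statements merged into one kernel-verified Lean document; each statement's English description precedes it below -/
import Mathlib

section
/- Let I=(a,b) be a bounded open interval and let h:(ℝ∖{0})×(ℝ∖{0})→ℝ be symmetric (h(ξ,η)=h(η,ξ) for all ξ,η≠0) and diagonal (h(ξ,η)=max{h(ξ,ξ),h(η,η),h(η,ξ),h(ξ,η)} for all ξ,η≠0). Define, for a piecewise constant function u on I with jump set S(u) and jumps [u](t)=u(t⁺)−u(t⁻), the functional H(u)=max over (s,t)∈S(u)×S(u) of h([u](s),[u](t)). Then H is lower semicontinuous on piecewise constant functions with respect to L¹(I) convergence (i.e., for every sequence uₙ of piecewise constant functions converging in L¹(I) to a piecewise constant function u one has H(u) ≤ liminf H(uₙ)) if and only if h is lower semicontinuous on (ℝ∖{0})×(ℝ∖{0}) and Cartesian submaximal, i.e., h(w₁+w₂,y) ≤ max{h(w₁,y),h(w₂,y),h(w₁,w₂)} for all w₁,w₂,y ∈ ℝ∖{0} with w₁+w₂ ≠ 0. -/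
open Filter MeasureTheory Set

/-- A piecewise constant function on the interval `(a, b)`, given by partition points
`a = t 0 < t 1 < ⋯ < t (N+1) = b` and values `v i` on the subinterval `(t i, t (i+1))`,
with adjacent values distinct (so that `S(u) = {t 1, …, t N}` is the minimal jump set). -/
structure PC (a b : ℝ) where
  N : ℕ
  t : Fin (N + 2) → ℝ
  v : Fin (N + 1) → ℝ
  t_mono : StrictMono t
  t_first : t 0 = a
  t_last : t (Fin.last (N + 1)) = b
  v_ne : ∀ i : Fin N, v i.castSucc ≠ v i.succ

namespace PC

variable {a b : ℝ}

/-- The function represented by the piecewise constant data. -/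
noncomputable def toFun (u : PC a b) : ℝ → ℝ := fun x =>
  ∑ i : Fin (u.N + 1), if u.t i.castSucc ≤ x ∧ x < u.t i.succ then u.v i else 0

/-- The jump `[u](t_{i+1}) = u(t_{i+1}⁺) - u(t_{i+1}⁻)` at the interior partition point
`t_{i+1}`, `i = 0, …, N-1`. -/
def jump (u : PC a b) (i : Fin u.N) : ℝ := u.v i.succ - u.v i.castSucc

/-- `uₙ → u` in `L¹((a,b))`. -/
def L1Tendsto (U : ℕ → PC a b) (u : PC a b) : Prop :=
  Tendsto (fun n => ∫ x in Ioo a b, |(U n).toFun x - u.toFun x|) atTop (nhds 0)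

/-- The nonlocal supremal functional
`H(u) = max_{(s,t) ∈ S(u) × S(u)} h([u](s), [u](t))`, with value `⊥` on jump-free functions. -/
noncomputable def energy (h : ℝ → ℝ → ℝ) (u : PC a b) : EReal :=
  ⨆ (i : Fin u.N) (j : Fin u.N), ((h (u.jump i) (u.jump j) : ℝ) : EReal)

end PC

/-- `H` is sequentially lower semicontinuous along `L¹((a,b))`-convergent sequences
of piecewise constant functions. -/
def EnergyLSC (a b : ℝ) (h : ℝ → ℝ → ℝ) : Prop :=
  ∀ (U : ℕ → PC a b) (u : PC a b), PC.L1Tendsto U u →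
    PC.energy h u ≤ Filter.liminf (fun n => PC.energy h (U n)) atTop

/-- `h` is Cartesian submaximal. -/
def CartesianSubmaximal (h : ℝ → ℝ → ℝ) : Prop :=
  ∀ w₁ w₂ y : ℝ, w₁ ≠ 0 → w₂ ≠ 0 → y ≠ 0 → w₁ + w₂ ≠ 0 →
    h (w₁ + w₂) y ≤ max (max (h w₁ y) (h w₂ y)) (h w₁ w₂)

section Aux
open Filter MeasureTheory Set

namespace PC
variable {a b : ℝ}

lemma measurable_toFun (u : PC a b) : Measurable u.toFun := by
  apply Finset.measurable_sum
  intro i _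
  have : (fun x => if u.t i.castSucc ≤ x ∧ x < u.t i.succ then u.v i else 0)
      = (Set.Ico (u.t i.castSucc) (u.t i.succ)).indicator (fun _ => u.v i) := by
    ext x; simp [Set.indicator_apply, Set.mem_Ico]
  rw [this]
  exact measurable_const.indicator measurableSet_Ico

lemma abs_toFun_le (u : PC a b) (x : ℝ) : |u.toFun x| ≤ ∑ i : Fin (u.N+1), |u.v i| := by
  refine (Finset.abs_sum_le_sum_abs _ _).trans ?_
  refine Finset.sum_le_sum fun i _ => ?_
  split_ifs <;> simp [abs_nonneg]

lemma toFun_eq (u : PC a b) (i : Fin (u.N+1)) {x : ℝ}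
    (h1 : u.t i.castSucc ≤ x) (h2 : x < u.t i.succ) : u.toFun x = u.v i := by
  rw [toFun]
  rw [Finset.sum_eq_single i]
  · simp [h1, h2]
  · intro j _ hji
    rw [if_neg]
    rintro ⟨hj1, hj2⟩
    rcases lt_or_gt_of_ne hji with hlt | hlt
    · have : (j.succ : Fin (u.N+2)) ≤ i.castSucc := by
        rw [Fin.le_def]; simp only [Fin.lt_def] at hlt; simp only [Fin.val_succ, Fin.coe_castSucc]; omega
      exact absurd (hj2.trans_le ((u.t_mono.monotone this).trans h1)) (lt_irrefl x)
    · have : (i.succ : Fin (u.N+2)) ≤ j.castSucc := by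
        rw [Fin.le_def]; simp only [Fin.lt_def] at hlt; simp only [Fin.val_succ, Fin.coe_castSucc]; omega
      exact absurd (h2.trans_le ((u.t_mono.monotone this).trans hj1)) (lt_irrefl x)
  · simp

lemma t_le_of_le {u : PC a b} {m : Fin (u.N+2)} {i : Fin (u.N+1)} {x : ℝ}
    (h1 : u.t i.castSucc ≤ x) (h2 : x < u.t i.succ) :
    u.t m ≤ x ↔ (m : ℕ) ≤ (i : ℕ) := by
  constructor
  · intro hm
    by_contra hc
    have : (i.succ : Fin (u.N+2)) ≤ m := by rw [Fin.le_def]; simp at hc ⊢; omega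
    exact absurd ((u.t_mono.monotone this).trans hm) (not_le.mpr h2)
  · intro hm
    have : m ≤ i.castSucc := by rw [Fin.le_def]; simpa using hm
    exact (u.t_mono.monotone this).trans h1

lemma exists_idx (u : PC a b) {x : ℝ} (h1 : a ≤ x) (h2 : x < b) :
    ∃ i : Fin (u.N+1), u.t i.castSucc ≤ x ∧ x < u.t i.succ := by
  classical
  set S : Finset (Fin (u.N+2)) := Finset.univ.filter (fun m => u.t m ≤ x) with hS
  have h0 : (0 : Fin (u.N+2)) ∈ S := by
    simp [hS, u.t_first, h1]
  have hne : S.Nonempty := ⟨0, h0⟩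
  set m := S.max' hne with hm
  have hmS : m ∈ S := S.max'_mem hne
  have hmx : u.t m ≤ x := by simpa [hS] using hmS
  have hmlast : m ≠ Fin.last (u.N+1) := by
    intro hl
    rw [hl, u.t_last] at hmx
    exact absurd (h2.trans_le hmx) (lt_irrefl x)
  obtain ⟨i, hi⟩ := Fin.exists_castSucc_eq.mpr hmlast
  refine ⟨i, by rw [hi]; exact hmx, ?_⟩
  by_contra hc
  push_neg at hc
  have : i.succ ∈ S := by simp [hS, hc]
  have := S.le_max' _ this
  rw [← hm, ← hi] at this
  exact absurd this (not_le.mpr (Fin.castSucc_lt_succ (i := i)))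

lemma jump_ne (u : PC a b) (i : Fin u.N) : u.jump i ≠ 0 :=
  sub_ne_zero.mpr (u.v_ne i).symm

end PC
end Aux

section Tele
open Filter MeasureTheory Set

lemma tele_nat (N : ℕ) (g : Fin (N+1) → ℝ) (i : Fin (N+1)) :
    ∀ jn : ℕ, (i:ℕ) ≤ jn → ∀ (hj : jn < N + 1),
      ∑ k ∈ Finset.univ.filter
          (fun k : Fin N => (i:ℕ) ≤ (k:ℕ) ∧ (k:ℕ) < jn), (g k.succ - g k.castSucc)
        = g ⟨jn, hj⟩ - g i := by
  intro jn hjn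
  induction jn, hjn using Nat.le_induction with
  | base =>
    intro hj
    have : Finset.univ.filter (fun k : Fin N => (i:ℕ) ≤ (k:ℕ) ∧ (k:ℕ) < (i:ℕ)) = ∅ := by
      apply Finset.filter_false_of_mem
      intro k _
      omega
    rw [this]
    simp
  | succ jn hjn ih =>
    intro hj
    have hjnN : jn < N := by omega
    have hins : Finset.univ.filter (fun k : Fin N => (i:ℕ) ≤ (k:ℕ) ∧ (k:ℕ) < jn + 1)
        = insert (⟨jn, hjnN⟩ : Fin N)
          (Finset.univ.filter (fun k : Fin N => (i:ℕ) ≤ (k:ℕ) ∧ (k:ℕ) < jn)) := by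
      ext k
      simp only [Finset.mem_filter, Finset.mem_insert, Finset.mem_univ, true_and, Fin.ext_iff]
      omega
    rw [hins, Finset.sum_insert (by simp)]
    rw [ih (by omega)]
    have h1 : (⟨jn, hjnN⟩ : Fin N).succ = (⟨jn+1, hj⟩ : Fin (N+1)) := rfl
    have h2 : (⟨jn, hjnN⟩ : Fin N).castSucc = (⟨jn, by omega⟩ : Fin (N+1)) := rfl
    rw [h1, h2]
    ring

namespace PC
variable {a b : ℝ}

lemma telescope (u : PC a b) {x y : ℝ} (i j : Fin (u.N+1))
    (hix1 : u.t i.castSucc ≤ x) (hix2 : x < u.t i.succ)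
    (hjy1 : u.t j.castSucc ≤ y) (hjy2 : y < u.t j.succ) (hxy : x ≤ y) :
    ∑ k ∈ Finset.univ.filter
        (fun k : Fin u.N => x < u.t k.succ.castSucc ∧ u.t k.succ.castSucc ≤ y), u.jump k
      = u.toFun y - u.toFun x := by
  rw [toFun_eq u i hix1 hix2, toFun_eq u j hjy1 hjy2]
  have hij : (i:ℕ) ≤ (j:ℕ) := by
    have := (t_le_of_le hjy1 hjy2 (m := i.castSucc)).mp (hix1.trans hxy)
    simpa using this
  have hcond : ∀ k : Fin u.N,
      (x < u.t k.succ.castSucc ∧ u.t k.succ.castSucc ≤ y) ↔ ((i:ℕ) ≤ (k:ℕ) ∧ (k:ℕ) < (j:ℕ)) := by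
    intro k
    have h1 := t_le_of_le (u := u) hix1 hix2 (m := k.succ.castSucc)
    have h2 := t_le_of_le (u := u) hjy1 hjy2 (m := k.succ.castSucc)
    rw [← not_le, h1, h2]
    simp only [Fin.coe_castSucc, Fin.val_succ]
    omega
  have hfil : Finset.univ.filter
        (fun k : Fin u.N => x < u.t k.succ.castSucc ∧ u.t k.succ.castSucc ≤ y)
      = Finset.univ.filter (fun k : Fin u.N => (i:ℕ) ≤ (k:ℕ) ∧ (k:ℕ) < (j:ℕ)) := by
    ext k
    simp only [Finset.mem_filter, Finset.mem_univ, true_and]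
    exact hcond k
  rw [hfil]
  have := tele_nat u.N u.v i (j : ℕ) hij j.isLt
  simpa [PC.jump] using this

end PC
end Tele

section Iter

lemma iter_aux {h : ℝ → ℝ → ℝ} (hsub : CartesianSubmaximal h)
    {ι : Type*} [DecidableEq ι] (z : ι → ℝ) (M : ℝ)
    (hM : ∀ k l, h (z k) (z l) ≤ M) (hz : ∀ k, z k ≠ 0) :
    ∀ (A : Finset ι) (y : ℝ), y ≠ 0 → (∀ k ∈ A, h (z k) y ≤ M) →
      A.sum z ≠ 0 → h (A.sum z) y ≤ M := by
  intro A
  induction A using Finset.strongInduction with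
  | _ A ih =>
    intro y hy hAy hs
    have hAne : A.Nonempty := by
      rcases A.eq_empty_or_nonempty with rfl | hne
      · simp at hs
      · exact hne
    rcases eq_or_lt_of_le (Finset.one_le_card.mpr hAne) with hc1 | hc2
    · obtain ⟨k, rfl⟩ := Finset.card_eq_one.mp hc1.symm
      rw [Finset.sum_singleton]
      exact hAy k (Finset.mem_singleton_self k)
    · -- card ≥ 2; find k with (A.erase k).sum z ≠ 0
      have hkey : ∃ k ∈ A, (A.erase k).sum z ≠ 0 := by
        by_contra hcon
        push_neg at hcon
        have hzk : ∀ k ∈ A, z k = A.sum z := by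
          intro k hk
          have := Finset.sum_erase_add A z hk
          rw [hcon k hk, zero_add] at this
          exact this
        have hsum : A.sum z = (A.card : ℝ) * A.sum z := by
          calc A.sum z = ∑ k ∈ A, A.sum z := Finset.sum_congr rfl hzk
          _ = (A.card : ℝ) * A.sum z := by rw [Finset.sum_const, nsmul_eq_mul]
        have : ((A.card : ℝ) - 1) * A.sum z = 0 := by linarith [hsum]
        rcases mul_eq_zero.mp this with hh | hh
        · have : (A.card : ℝ) = 1 := by linarith
          have : A.card = 1 := by exact_mod_cast this
          omega
        · exact hs hh
      obtain ⟨k, hk, hSk⟩ := hkey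
      have hsplit : A.sum z = (A.erase k).sum z + z k := (Finset.sum_erase_add A z hk).symm
      have hsubA : A.erase k ⊂ A := Finset.erase_ssubset hk
      have hterm1 : h ((A.erase k).sum z) y ≤ M :=
        ih _ hsubA y hy (fun l hl => hAy l (Finset.mem_of_mem_erase hl)) hSk
      have hterm3 : h ((A.erase k).sum z) (z k) ≤ M :=
        ih _ hsubA (z k) (hz k) (fun l _ => hM l k) hSk
      rw [hsplit]
      refine (hsub _ _ _ hSk (hz k) hy (by rw [← hsplit]; exact hs)).trans ?_
      exact max_le (max_le hterm1 (hAy k hk)) hterm3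

lemma iter_two {h : ℝ → ℝ → ℝ} (hsub : CartesianSubmaximal h)
    (hsymm : ∀ ξ η : ℝ, ξ ≠ 0 → η ≠ 0 → h ξ η = h η ξ)
    {ι : Type*} [DecidableEq ι] (z : ι → ℝ) (M : ℝ)
    (hM : ∀ k l, h (z k) (z l) ≤ M) (hz : ∀ k, z k ≠ 0)
    (A B : Finset ι) (hA : A.sum z ≠ 0) (hB : B.sum z ≠ 0) :
    h (A.sum z) (B.sum z) ≤ M := by
  refine iter_aux hsub z M hM hz A (B.sum z) hB ?_ hA
  intro k _
  rw [hsymm _ _ (hz k) hB]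
  exact iter_aux hsub z M hM hz B (z k) (hz k) (fun l _ => hM l k) hB

end Iter

section MeasureAux
open Filter MeasureTheory Set

namespace PC
variable {a b : ℝ}

lemma integrable_abs_sub (u w : PC a b) :
    Integrable (fun x => |w.toFun x - u.toFun x|) (volume.restrict (Ioo a b)) := by
  haveI : IsFiniteMeasure (volume.restrict (Ioo a b)) := ⟨by
    rw [Measure.restrict_apply_univ]; exact measure_Ioo_lt_top⟩
  refine Integrable.mono' (integrable_const ((∑ i : Fin (w.N+1), |w.v i|) + ∑ i : Fin (u.N+1), |u.v i|))
    ((w.measurable_toFun.sub u.measurable_toFun).abs.aestronglyMeasurable) ?_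
  refine ae_of_all _ fun x => ?_
  rw [Real.norm_eq_abs, abs_abs]
  exact (abs_sub _ _).trans (add_le_add (w.abs_toFun_le x) (u.abs_toFun_le x))

lemma tendstoInMeasure_of_L1 {U : ℕ → PC a b} {u : PC a b} (hc : L1Tendsto U u) :
    TendstoInMeasure (volume.restrict (Ioo a b)) (fun n => (U n).toFun) atTop u.toFun := by
  refine tendstoInMeasure_of_tendsto_eLpNorm one_ne_zero
    (fun n => (U n).measurable_toFun.aestronglyMeasurable)
    u.measurable_toFun.aestronglyMeasurable ?_
  have key : ∀ n, eLpNorm ((U n).toFun - u.toFun) 1 (volume.restrict (Ioo a b))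
      = ENNReal.ofReal (∫ x in Ioo a b, |(U n).toFun x - u.toFun x|) := by
    intro n
    rw [eLpNorm_one_eq_lintegral_enorm]
    have hcg : ∫⁻ x in Ioo a b, (‖((U n).toFun - u.toFun) x‖ₑ : ENNReal)
        = ∫⁻ x in Ioo a b, ENNReal.ofReal |(U n).toFun x - u.toFun x| := by
      refine lintegral_congr fun x => ?_
      rw [← ofReal_norm_eq_enorm, Pi.sub_apply, Real.norm_eq_abs]
    rw [hcg, ← ofReal_integral_eq_lintegral_ofReal (u.integrable_abs_sub (U n))
        (ae_of_all _ fun x => abs_nonneg _)]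
  simp only [key]
  have := ENNReal.tendsto_ofReal hc
  simpa using this

lemma exists_point_ae {P : ℝ → Prop} (hP : ∀ᵐ x ∂(volume.restrict (Ioo a b)), P x)
    {c d : ℝ} (hac : a ≤ c) (hcd : c < d) (hdb : d ≤ b) : ∃ x, x ∈ Ioo c d ∧ P x := by
  by_contra hcon
  push_neg at hcon
  have hsub : Ioo c d ⊆ {x | ¬ P x} := fun x hx => hcon x hx
  have h0 : (volume.restrict (Ioo a b)) (Ioo c d) = 0 :=
    measure_mono_null hsub (ae_iff.mp hP)
  rw [Measure.restrict_apply measurableSet_Ioo,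
    inter_eq_self_of_subset_left (Ioo_subset_Ioo hac hdb), Real.volume_Ioo] at h0
  exact absurd h0 (by simp [hcd])

end PC
end MeasureAux

section Reverse
open Filter MeasureTheory Set

lemma energyLSC_of (a b : ℝ) (hab : a < b) (h : ℝ → ℝ → ℝ)
    (hsymm : ∀ ξ η : ℝ, ξ ≠ 0 → η ≠ 0 → h ξ η = h η ξ)
    (hlsc : LowerSemicontinuousOn (fun p : ℝ × ℝ => h p.1 p.2)
          {p : ℝ × ℝ | p.1 ≠ 0 ∧ p.2 ≠ 0})
    (hsub : CartesianSubmaximal h) : EnergyLSC a b h := by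
  classical
  intro U u hconv
  rw [PC.energy]
  refine iSup₂_le fun i j => ?_
  by_contra hcon
  push_neg at hcon
  obtain ⟨c', hca, hcb⟩ := exists_between hcon
  have hc'top : c' ≠ ⊤ := (hcb.trans_le le_top).ne
  have hc'bot : c' ≠ ⊥ := (bot_le.trans_lt hca).ne'
  set r := c'.toReal with hrdef
  have hcr : c' = (r : EReal) := (EReal.coe_toReal hc'top hc'bot).symm
  have hfreq : ∃ᶠ n in atTop, PC.energy h (U n) < c' :=
    frequently_lt_of_liminf_lt (h := hca)
  obtain ⟨φ, hφm, hφ⟩ := Filter.extraction_of_frequently_atTop hfreq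
  have hconvφ : PC.L1Tendsto (fun n => U (φ n)) u := hconv.comp hφm.tendsto_atTop
  obtain ⟨ψ, hψm, hae⟩ := (PC.tendstoInMeasure_of_L1 hconvφ).exists_seq_tendsto_ae
  set V : ℕ → PC a b := fun n => U (φ (ψ n)) with hV
  have hpairs : ∀ n (k l : Fin (V n).N), h ((V n).jump k) ((V n).jump l) ≤ r := by
    intro n k l
    have h1 : ((h ((V n).jump k) ((V n).jump l) : ℝ) : EReal) ≤ PC.energy h (V n) :=
      le_iSup₂ (f := fun k l => ((h ((V n).jump k) ((V n).jump l) : ℝ) : EReal)) k l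
    have h2 : PC.energy h (V n) ≤ (r : EReal) := by
      rw [← hcr]; exact (hφ (ψ n)).le
    exact_mod_cast h1.trans h2
  -- choose sample points around each jump of u
  have key : ∀ (i : Fin u.N), ∃ x₁ x₂ : ℝ, a < x₁ ∧ x₁ < x₂ ∧ x₂ < b ∧
      Tendsto (fun n => (V n).toFun x₂ - (V n).toFun x₁) atTop (nhds (u.jump i)) := by
    intro i
    set p0 := u.t i.castSucc.castSucc with hp0
    set p1 := u.t i.succ.castSucc with hp1
    set p2 := u.t i.succ.succ with hp2
    have h01 : p0 < p1 := u.t_mono (by exact Fin.castSucc_lt_castSucc_iff.mpr (Fin.castSucc_lt_succ (i := i)))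
    have h12 : p1 < p2 := u.t_mono (Fin.castSucc_lt_succ (i := i.succ))
    have hap0 : a ≤ p0 := by
      rw [← u.t_first]; exact u.t_mono.monotone (Fin.zero_le _)
    have hp2b : p2 ≤ b := by
      rw [← u.t_last]; exact u.t_mono.monotone (Fin.le_last _)
    obtain ⟨x₁, hx₁mem, hx₁⟩ := PC.exists_point_ae (a := a) (b := b) hae hap0 h01 (h12.le.trans hp2b)
    obtain ⟨x₂, hx₂mem, hx₂⟩ := PC.exists_point_ae (a := a) (b := b) hae (hap0.trans h01.le) h12 hp2b
    refine ⟨x₁, x₂, lt_of_le_of_lt hap0 hx₁mem.1, hx₁mem.2.trans_le (le_of_lt hx₂mem.1), hx₂mem.2.trans_le hp2b, ?_⟩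
    have hux₁ : u.toFun x₁ = u.v i.castSucc := by
      refine u.toFun_eq i.castSucc hx₁mem.1.le ?_
      rw [Fin.succ_castSucc]; exact hx₁mem.2
    have hux₂ : u.toFun x₂ = u.v i.succ := u.toFun_eq i.succ hx₂mem.1.le hx₂mem.2
    have := (hx₂.sub hx₁)
    rw [hux₁, hux₂] at this
    exact this
  obtain ⟨x₁, x₂, hax1, hx12, hx2b, hta⟩ := key i
  obtain ⟨y₁, y₂, hay1, hy12, hy2b, htb⟩ := key j
  set A : ℕ → ℝ := fun n => (V n).toFun x₂ - (V n).toFun x₁ with hA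
  set B : ℕ → ℝ := fun n => (V n).toFun y₂ - (V n).toFun y₁ with hB
  have hne : ∀ᶠ n in atTop, A n ≠ 0 ∧ B n ≠ 0 :=
    (hta.eventually_ne (u.jump_ne i)).and (htb.eventually_ne (u.jump_ne j))
  have hbound : ∀ᶠ n in atTop, h (A n) (B n) ≤ r := by
    refine hne.mono fun n hn => ?_
    obtain ⟨i₁, hi₁1, hi₁2⟩ := (V n).exists_idx (x := x₁) hax1.le (hx12.trans hx2b)
    obtain ⟨i₂, hi₂1, hi₂2⟩ := (V n).exists_idx (x := x₂) (hax1.trans hx12).le hx2b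
    obtain ⟨j₁, hj₁1, hj₁2⟩ := (V n).exists_idx (x := y₁) hay1.le (hy12.trans hy2b)
    obtain ⟨j₂, hj₂1, hj₂2⟩ := (V n).exists_idx (x := y₂) (hay1.trans hy12).le hy2b
    have hAeq : A n = ∑ k ∈ Finset.univ.filter
        (fun k : Fin (V n).N => x₁ < (V n).t k.succ.castSucc ∧ (V n).t k.succ.castSucc ≤ x₂),
        (V n).jump k :=
      ((V n).telescope i₁ i₂ hi₁1 hi₁2 hi₂1 hi₂2 hx12.le).symm
    have hBeq : B n = ∑ k ∈ Finset.univ.filter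
        (fun k : Fin (V n).N => y₁ < (V n).t k.succ.castSucc ∧ (V n).t k.succ.castSucc ≤ y₂),
        (V n).jump k :=
      ((V n).telescope j₁ j₂ hj₁1 hj₁2 hj₂1 hj₂2 hy12.le).symm
    rw [hAeq, hBeq]
    refine iter_two hsub hsymm (V n).jump r (hpairs n) ((V n).jump_ne) _ _ ?_ ?_
    · rw [← hAeq]; exact hn.1
    · rw [← hBeq]; exact hn.2
  have hmem : ((u.jump i, u.jump j) : ℝ × ℝ) ∈ {p : ℝ × ℝ | p.1 ≠ 0 ∧ p.2 ≠ 0} :=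
    ⟨u.jump_ne i, u.jump_ne j⟩
  have hlt : (r : ℝ) < h (u.jump i) (u.jump j) := by
    rw [hcr] at hcb
    exact_mod_cast hcb
  have hev := hlsc _ hmem r hlt
  have htend : Tendsto (fun n => ((A n, B n) : ℝ × ℝ)) atTop
      (nhdsWithin (u.jump i, u.jump j) {p : ℝ × ℝ | p.1 ≠ 0 ∧ p.2 ≠ 0}) := by
    refine tendsto_nhdsWithin_of_tendsto_nhds_of_eventually_within _
      (hta.prodMk_nhds htb) (hne.mono fun n hn => hn)
  have hev2 : ∀ᶠ n in atTop, r < h (A n) (B n) := htend.eventually hev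
  obtain ⟨n, hn1, hn2⟩ := (hbound.and hev2).exists
  exact absurd hn1 (not_le.mpr hn2)

end Reverse

section Constructions
open Filter MeasureTheory Set

/-- A PC function with two jumps `ξ, η` at fixed interior points. -/
noncomputable def pcTwo (a b : ℝ) (hab : a < b) (ξ η : ℝ) (hξ : ξ ≠ 0) (hη : η ≠ 0) :
    PC a b where
  N := 2
  t := ![a, (2*a+b)/3, (a+2*b)/3, b]
  v := ![0, ξ, ξ + η]
  t_mono := by
    rw [Fin.strictMono_iff_lt_succ]
    intro i
    fin_cases i <;> simp [Fin.castSucc, Fin.castAdd, Fin.castLE, Fin.succ] <;> linarith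
  t_first := rfl
  t_last := rfl
  v_ne := by
    intro i
    fin_cases i <;> simp [Fin.castSucc, Fin.castAdd, Fin.castLE, Fin.succ]
    · exact fun hh => hξ hh.symm
    · intro hh; exact hη (by linarith)

lemma pcTwo_jump0 (a b : ℝ) (hab : a < b) (ξ η : ℝ) (hξ : ξ ≠ 0) (hη : η ≠ 0) :
    (pcTwo a b hab ξ η hξ hη).jump ⟨0, Nat.zero_lt_two⟩ = ξ := by
  simp [PC.jump, pcTwo, Fin.castSucc, Fin.castAdd, Fin.castLE, Fin.succ]

lemma pcTwo_jump1 (a b : ℝ) (hab : a < b) (ξ η : ℝ) (hξ : ξ ≠ 0) (hη : η ≠ 0) :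
    (pcTwo a b hab ξ η hξ hη).jump ⟨1, Nat.one_lt_two⟩ = η := by
  simp [PC.jump, pcTwo, Fin.castSucc, Fin.castAdd, Fin.castLE, Fin.succ]
  try ring

lemma pcTwo_jump_cases (a b : ℝ) (hab : a < b) (ξ η : ℝ) (hξ : ξ ≠ 0) (hη : η ≠ 0)
    (k : Fin (pcTwo a b hab ξ η hξ hη).N) :
    (pcTwo a b hab ξ η hξ hη).jump k = ξ ∨ (pcTwo a b hab ξ η hξ hη).jump k = η := by
  obtain ⟨kv, hk⟩ := k
  have hk2 : kv < 2 := hk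
  match kv with
  | 0 => exact Or.inl (pcTwo_jump0 a b hab ξ η hξ hη)
  | 1 => exact Or.inr (pcTwo_jump1 a b hab ξ η hξ hη)

lemma energy_pcTwo_le (a b : ℝ) (hab : a < b) (h : ℝ → ℝ → ℝ)
    (hsymm : ∀ ξ η : ℝ, ξ ≠ 0 → η ≠ 0 → h ξ η = h η ξ)
    (hdiag : ∀ ξ η : ℝ, ξ ≠ 0 → η ≠ 0 →
      h ξ η = max (max (h ξ ξ) (h η η)) (max (h η ξ) (h ξ η)))
    (ξ η : ℝ) (hξ : ξ ≠ 0) (hη : η ≠ 0) :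
    PC.energy h (pcTwo a b hab ξ η hξ hη) ≤ ((h ξ η : ℝ) : EReal) := by
  have hd := hdiag ξ η hξ hη
  have h11 : h ξ ξ ≤ h ξ η := by
    rw [hd]; exact le_max_of_le_left (le_max_left _ _)
  have h22 : h η η ≤ h ξ η := by
    rw [hd]; exact le_max_of_le_left (le_max_right _ _)
  have h21 : h η ξ ≤ h ξ η := (hsymm η ξ hη hξ).le
  refine iSup₂_le fun k l => ?_
  rcases pcTwo_jump_cases a b hab ξ η hξ hη k with hk | hk <;>
    rcases pcTwo_jump_cases a b hab ξ η hξ hη l with hl | hl <;>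
    rw [hk, hl] <;>
    exact EReal.coe_le_coe_iff.mpr (by first | exact le_rfl | exact h11 | exact h22 | exact h21)

lemma energy_pcTwo_ge (a b : ℝ) (hab : a < b) (h : ℝ → ℝ → ℝ)
    (ξ η : ℝ) (hξ : ξ ≠ 0) (hη : η ≠ 0) :
    ((h ξ η : ℝ) : EReal) ≤ PC.energy h (pcTwo a b hab ξ η hξ hη) := by
  have := le_iSup₂ (f := fun k l =>
    ((h ((pcTwo a b hab ξ η hξ hη).jump k) ((pcTwo a b hab ξ η hξ hη).jump l) : ℝ) : EReal))
    ⟨0, Nat.zero_lt_two⟩ ⟨1, Nat.one_lt_two⟩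
  rw [pcTwo_jump0, pcTwo_jump1] at this
  exact this

end Constructions

section ForwardLSC
open Filter MeasureTheory Set

lemma pcTwo_sub_eval (a b : ℝ) (hab : a < b) (ξ η : ℝ) (hξ : ξ ≠ 0) (hη : η ≠ 0)
    (ξ' η' : ℝ) (hξ' : ξ' ≠ 0) (hη' : η' ≠ 0) (x : ℝ) :
    (pcTwo a b hab ξ' η' hξ' hη').toFun x - (pcTwo a b hab ξ η hξ hη).toFun x
      = (if (2*a+b)/3 ≤ x ∧ x < (a+2*b)/3 then ξ' - ξ else 0)
        + (if (a+2*b)/3 ≤ x ∧ x < b then (ξ'+η') - (ξ+η) else 0) := by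
  simp only [PC.toFun, pcTwo]
  erw [Fin.sum_univ_three, Fin.sum_univ_three]
  simp [Fin.sum_univ_succ, Fin.castSucc, Fin.castAdd, Fin.castLE, Fin.succ]
  split_ifs <;> ring

lemma lsc_of_energyLSC_s0 (a b : ℝ) (hab : a < b) (h : ℝ → ℝ → ℝ)
    (hsymm : ∀ ξ η : ℝ, ξ ≠ 0 → η ≠ 0 → h ξ η = h η ξ)
    (hdiag : ∀ ξ η : ℝ, ξ ≠ 0 → η ≠ 0 →
      h ξ η = max (max (h ξ ξ) (h η η)) (max (h η ξ) (h ξ η)))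
    (hE : EnergyLSC a b h) :
    LowerSemicontinuousOn (fun p : ℝ × ℝ => h p.1 p.2) {p : ℝ × ℝ | p.1 ≠ 0 ∧ p.2 ≠ 0} := by
  intro p hp c hc
  by_contra hcon
  rw [Filter.not_eventually] at hcon
  obtain ⟨q, hqt, hqc⟩ := Filter.exists_seq_forall_of_frequently hcon
  have hqS : ∀ᶠ n in atTop, q n ∈ {p : ℝ × ℝ | p.1 ≠ 0 ∧ p.2 ≠ 0} :=
    hqt.eventually eventually_mem_nhdsWithin
  obtain ⟨N₀, hN₀⟩ := eventually_atTop.mp hqS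
  set Q : ℕ → ℝ × ℝ := fun n => q (n + N₀) with hQdef
  have hQS : ∀ n, (Q n).1 ≠ 0 ∧ (Q n).2 ≠ 0 := fun n => hN₀ _ (Nat.le_add_left _ _)
  have hQt : Tendsto Q atTop (nhds p) :=
    ((hqt.mono_right nhdsWithin_le_nhds)).comp (tendsto_add_atTop_nat N₀)
  have hQc : ∀ n, h (Q n).1 (Q n).2 ≤ c := fun n => not_lt.mp (hqc (n + N₀))
  set u := pcTwo a b hab p.1 p.2 hp.1 hp.2 with hu
  set U : ℕ → PC a b := fun n => pcTwo a b hab (Q n).1 (Q n).2 (hQS n).1 (hQS n).2 with hU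
  set δ : ℕ → ℝ := fun n => |(Q n).1 - p.1| + |((Q n).1 + (Q n).2) - (p.1 + p.2)| with hδdef
  have hptw : ∀ n x, |(U n).toFun x - u.toFun x| ≤ δ n := by
    intro n x
    rw [hU, hu]
    rw [pcTwo_sub_eval a b hab p.1 p.2 hp.1 hp.2 (Q n).1 (Q n).2 (hQS n).1 (hQS n).2 x]
    refine (abs_add_le _ _).trans (add_le_add ?_ ?_)
    · split_ifs
      · exact le_rfl
      · rw [abs_zero]; exact abs_nonneg _
    · split_ifs
      · exact le_rfl
      · rw [abs_zero]; exact abs_nonneg _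
  have hint : ∀ n, (∫ x in Ioo a b, |(U n).toFun x - u.toFun x|) ≤ δ n * (b - a) := by
    intro n
    calc (∫ x in Ioo a b, |(U n).toFun x - u.toFun x|)
        ≤ ∫ _x in Ioo a b, δ n :=
          integral_mono (u.integrable_abs_sub (U n)) (integrable_const _) (fun x => hptw n x)
      _ = δ n * (b - a) := by
          rw [integral_const, measureReal_def, Measure.restrict_apply_univ, Real.volume_Ioo,
            ENNReal.toReal_ofReal (by linarith : (0:ℝ) ≤ b - a), smul_eq_mul]
          ring
  have h1 : Tendsto (fun n => (Q n).1) atTop (nhds p.1) := (continuous_fst.tendsto p).comp hQt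
  have h2 : Tendsto (fun n => (Q n).2) atTop (nhds p.2) := (continuous_snd.tendsto p).comp hQt
  have hδ : Tendsto δ atTop (nhds 0) := by
    have e1 : Tendsto (fun n => |(Q n).1 - p.1|) atTop (nhds 0) := by
      have := (h1.sub (tendsto_const_nhds (x := p.1))).abs
      simpa using this
    have e2 : Tendsto (fun n => |(Q n).1 + (Q n).2 - (p.1 + p.2)|) atTop (nhds 0) := by
      have := ((h1.add h2).sub (tendsto_const_nhds (x := p.1 + p.2))).abs
      simpa using this
    have := e1.add e2
    simpa using this
  have hL1 : PC.L1Tendsto U u :=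
    squeeze_zero (fun n => integral_nonneg fun x => abs_nonneg _) hint
      (by simpa using hδ.mul_const (b - a))
  have hmain := hE U u hL1
  have hge : ((h p.1 p.2 : ℝ) : EReal) ≤ PC.energy h u := energy_pcTwo_ge a b hab h p.1 p.2 hp.1 hp.2
  have hlimle : Filter.liminf (fun n => PC.energy h (U n)) atTop ≤ ((c : ℝ) : EReal) := by
    have hble : ∀ n, PC.energy h (U n) ≤ ((c : ℝ) : EReal) := by
      intro n
      refine (energy_pcTwo_le a b hab h hsymm hdiag (Q n).1 (Q n).2 (hQS n).1 (hQS n).2).trans ?_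
      exact EReal.coe_le_coe_iff.mpr (hQc n)
    calc Filter.liminf (fun n => PC.energy h (U n)) atTop
        ≤ Filter.liminf (fun _ => ((c : ℝ) : EReal)) atTop :=
          Filter.liminf_le_liminf (Filter.Eventually.of_forall hble)
      _ = ((c : ℝ) : EReal) := Filter.liminf_const _
  have : ((h p.1 p.2 : ℝ) : EReal) ≤ ((c : ℝ) : EReal) := hge.trans (hmain.trans hlimle)
  exact absurd (EReal.coe_le_coe_iff.mp this) (not_le.mpr hc)

end ForwardLSC

section ForwardSubmax
open Filter MeasureTheory Set

noncomputable def pcThree (a b : ℝ) (hab : a < b) (w₁ w₂ y : ℝ)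
    (h1 : w₁ ≠ 0) (h2 : w₂ ≠ 0) (hy : y ≠ 0)
    (ε : ℝ) (hε0 : 0 < ε) (hε1 : ε < (b - a)/3) : PC a b where
  N := 3
  t := ![a, (2*a+b)/3 - ε, (2*a+b)/3, (a+2*b)/3, b]
  v := ![0, w₁, w₁ + w₂, w₁ + w₂ + y]
  t_mono := by
    rw [Fin.strictMono_iff_lt_succ]
    intro i
    fin_cases i <;> simp [Fin.castSucc, Fin.castAdd, Fin.castLE, Fin.succ] <;> linarith
  t_first := rfl
  t_last := rfl
  v_ne := by
    intro i
    fin_cases i <;> simp [Fin.castSucc, Fin.castAdd, Fin.castLE, Fin.succ]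
    · exact fun hh => h1 hh.symm
    · intro hh; exact h2 (by linarith)
    · intro hh; exact hy (by linarith)

lemma pcThree_jump_cases (a b : ℝ) (hab : a < b) (w₁ w₂ y : ℝ)
    (h1 : w₁ ≠ 0) (h2 : w₂ ≠ 0) (hy : y ≠ 0)
    (ε : ℝ) (hε0 : 0 < ε) (hε1 : ε < (b - a)/3)
    (k : Fin (pcThree a b hab w₁ w₂ y h1 h2 hy ε hε0 hε1).N) :
    (pcThree a b hab w₁ w₂ y h1 h2 hy ε hε0 hε1).jump k = w₁ ∨
    (pcThree a b hab w₁ w₂ y h1 h2 hy ε hε0 hε1).jump k = w₂ ∨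
    (pcThree a b hab w₁ w₂ y h1 h2 hy ε hε0 hε1).jump k = y := by
  obtain ⟨kv, hk⟩ := k
  have hk3 : kv < 3 := hk
  match kv with
  | 0 =>
    refine Or.inl ?_
    simp [PC.jump, pcThree, Fin.castSucc, Fin.castAdd, Fin.castLE, Fin.succ]
  | 1 =>
    refine Or.inr (Or.inl ?_)
    simp [PC.jump, pcThree, Fin.castSucc, Fin.castAdd, Fin.castLE, Fin.succ]
  | 2 =>
    refine Or.inr (Or.inr ?_)
    simp [PC.jump, pcThree, Fin.castSucc, Fin.castAdd, Fin.castLE, Fin.succ]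

lemma energy_pcThree_le (a b : ℝ) (hab : a < b) (h : ℝ → ℝ → ℝ)
    (hsymm : ∀ ξ η : ℝ, ξ ≠ 0 → η ≠ 0 → h ξ η = h η ξ)
    (hdiag : ∀ ξ η : ℝ, ξ ≠ 0 → η ≠ 0 →
      h ξ η = max (max (h ξ ξ) (h η η)) (max (h η ξ) (h ξ η)))
    (w₁ w₂ y : ℝ) (h1 : w₁ ≠ 0) (h2 : w₂ ≠ 0) (hy : y ≠ 0)
    (ε : ℝ) (hε0 : 0 < ε) (hε1 : ε < (b - a)/3) :
    PC.energy h (pcThree a b hab w₁ w₂ y h1 h2 hy ε hε0 hε1)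
      ≤ ((max (max (h w₁ y) (h w₂ y)) (h w₁ w₂) : ℝ) : EReal) := by
  set M := max (max (h w₁ y) (h w₂ y)) (h w₁ w₂) with hM
  have hd12 := hdiag w₁ w₂ h1 h2
  have hd1y := hdiag w₁ y h1 hy
  have hd2y := hdiag w₂ y h2 hy
  have b11 : h w₁ w₁ ≤ M := le_max_of_le_right (by rw [hd12]; exact le_max_of_le_left (le_max_left _ _))
  have b22 : h w₂ w₂ ≤ M := le_max_of_le_right (by rw [hd12]; exact le_max_of_le_left (le_max_right _ _))
  have byy : h y y ≤ M := le_max_of_le_left (le_max_of_le_left (by rw [hd1y]; exact le_max_of_le_left (le_max_right _ _)))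
  have b12 : h w₁ w₂ ≤ M := le_max_right _ _
  have b21 : h w₂ w₁ ≤ M := (hsymm w₂ w₁ h2 h1).le.trans b12
  have b1y : h w₁ y ≤ M := le_max_of_le_left (le_max_left _ _)
  have by1 : h y w₁ ≤ M := (hsymm y w₁ hy h1).le.trans b1y
  have b2y : h w₂ y ≤ M := le_max_of_le_left (le_max_right _ _)
  have by2 : h y w₂ ≤ M := (hsymm y w₂ hy h2).le.trans b2y
  refine iSup₂_le fun k l => ?_
  rcases pcThree_jump_cases a b hab w₁ w₂ y h1 h2 hy ε hε0 hε1 k with hk | hk | hk <;>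
    rcases pcThree_jump_cases a b hab w₁ w₂ y h1 h2 hy ε hε0 hε1 l with hl | hl | hl <;>
    rw [hk, hl] <;>
    exact EReal.coe_le_coe_iff.mpr (by assumption)

lemma pcThree_sub_eval (a b : ℝ) (hab : a < b) (w₁ w₂ y : ℝ)
    (h1 : w₁ ≠ 0) (h2 : w₂ ≠ 0) (hy : y ≠ 0) (hsum : w₁ + w₂ ≠ 0)
    (ε : ℝ) (hε0 : 0 < ε) (hε1 : ε < (b - a)/3) (x : ℝ) :
    (pcThree a b hab w₁ w₂ y h1 h2 hy ε hε0 hε1).toFun x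
      - (pcTwo a b hab (w₁ + w₂) y hsum hy).toFun x
      = if (2*a+b)/3 - ε ≤ x ∧ x < (2*a+b)/3 then w₁ else 0 := by
  simp only [PC.toFun, pcThree, pcTwo]
  erw [Fin.sum_univ_four, Fin.sum_univ_three]
  simp [Fin.sum_univ_succ, Fin.castSucc, Fin.castAdd, Fin.castLE,
    Fin.succ]
  ring

lemma pcThree_integral (a b : ℝ) (hab : a < b) (w₁ w₂ y : ℝ)
    (h1 : w₁ ≠ 0) (h2 : w₂ ≠ 0) (hy : y ≠ 0) (hsum : w₁ + w₂ ≠ 0)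
    (ε : ℝ) (hε0 : 0 < ε) (hε1 : ε < (b - a)/3) :
    (∫ x in Ioo a b, |(pcThree a b hab w₁ w₂ y h1 h2 hy ε hε0 hε1).toFun x
      - (pcTwo a b hab (w₁ + w₂) y hsum hy).toFun x|) = ε * |w₁| := by
  have hm1b : (2*a+b)/3 < b := by linarith
  have ham1 : a < (2*a+b)/3 - ε := by linarith
  have hsub : Ico ((2*a+b)/3 - ε) ((2*a+b)/3) ⊆ Ioo a b := by
    intro x hx
    exact ⟨ham1.trans_le hx.1, hx.2.trans hm1b⟩
  have hptw : ∀ x : ℝ, |(pcThree a b hab w₁ w₂ y h1 h2 hy ε hε0 hε1).toFun x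
      - (pcTwo a b hab (w₁ + w₂) y hsum hy).toFun x|
      = (Ico ((2*a+b)/3 - ε) ((2*a+b)/3)).indicator (fun _ => |w₁|) x := by
    intro x
    rw [pcThree_sub_eval a b hab w₁ w₂ y h1 h2 hy hsum ε hε0 hε1 x, Set.indicator_apply]
    by_cases hc : x ∈ Ico ((2*a+b)/3 - ε) ((2*a+b)/3)
    · rw [if_pos hc, if_pos (Set.mem_Ico.mp hc)]
    · rw [if_neg hc, if_neg (fun hh => hc (Set.mem_Ico.mpr hh)), abs_zero]
  calc (∫ x in Ioo a b, |(pcThree a b hab w₁ w₂ y h1 h2 hy ε hε0 hε1).toFun x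
      - (pcTwo a b hab (w₁ + w₂) y hsum hy).toFun x|)
      = ∫ x in Ioo a b, (Ico ((2*a+b)/3 - ε) ((2*a+b)/3)).indicator (fun _ => |w₁|) x := by
        exact integral_congr_ae (Filter.Eventually.of_forall hptw)
    _ = ((volume.restrict (Ioo a b)) (Ico ((2*a+b)/3 - ε) ((2*a+b)/3))).toReal • |w₁| :=
        integral_indicator_const _ measurableSet_Ico
    _ = ε * |w₁| := by
        rw [Measure.restrict_apply measurableSet_Ico,
          inter_eq_self_of_subset_left hsub, Real.volume_Ico, sub_sub_cancel,
          ENNReal.toReal_ofReal hε0.le, smul_eq_mul]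

lemma submax_of_energyLSC (a b : ℝ) (hab : a < b) (h : ℝ → ℝ → ℝ)
    (hsymm : ∀ ξ η : ℝ, ξ ≠ 0 → η ≠ 0 → h ξ η = h η ξ)
    (hdiag : ∀ ξ η : ℝ, ξ ≠ 0 → η ≠ 0 →
      h ξ η = max (max (h ξ ξ) (h η η)) (max (h η ξ) (h ξ η)))
    (hE : EnergyLSC a b h) : CartesianSubmaximal h := by
  intro w₁ w₂ y hw₁ hw₂ hy hsum
  set C := (b - a)/3 with hC
  have hC0 : 0 < C := by rw [hC]; linarith
  set ε : ℕ → ℝ := fun n => C / (n + 2) with hεdef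
  have hε0 : ∀ n, 0 < ε n := fun n => div_pos hC0 (by positivity)
  have hε1 : ∀ n : ℕ, ε n < (b - a)/3 := by
    intro n
    rw [hεdef, ← hC]
    refine div_lt_self hC0 ?_
    have : (0:ℝ) ≤ (n:ℝ) := Nat.cast_nonneg n
    linarith
  set u := pcTwo a b hab (w₁ + w₂) y hsum hy with hu
  set U : ℕ → PC a b := fun n =>
    pcThree a b hab w₁ w₂ y hw₁ hw₂ hy (ε n) (hε0 n) (hε1 n) with hU
  have hεt : Tendsto (fun n : ℕ => ε n * |w₁|) atTop (nhds 0) := by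
    have hh := (tendsto_const_div_atTop_nhds_zero_nat C).comp (tendsto_add_atTop_nat 2)
    have hh2 : Tendsto ε atTop (nhds 0) := by
      have hfun : ε = (fun n : ℕ => C / ((n + 2 : ℕ) : ℝ)) := by
        funext n
        rw [hεdef]
        push_cast
        ring
      rw [hfun]
      exact hh
    simpa using hh2.mul_const |w₁|
  have hL1 : PC.L1Tendsto U u := by
    rw [PC.L1Tendsto]
    have heq : ∀ n, (∫ x in Ioo a b, |(U n).toFun x - u.toFun x|) = ε n * |w₁| := by
      intro n
      exact pcThree_integral a b hab w₁ w₂ y hw₁ hw₂ hy hsum (ε n) (hε0 n) (hε1 n)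
    simp only [heq]
    exact hεt
  have hmain := hE U u hL1
  have hge : ((h (w₁ + w₂) y : ℝ) : EReal) ≤ PC.energy h u :=
    energy_pcTwo_ge a b hab h (w₁ + w₂) y hsum hy
  have hlimle : Filter.liminf (fun n => PC.energy h (U n)) atTop
      ≤ ((max (max (h w₁ y) (h w₂ y)) (h w₁ w₂) : ℝ) : EReal) := by
    have hble : ∀ n, PC.energy h (U n)
        ≤ ((max (max (h w₁ y) (h w₂ y)) (h w₁ w₂) : ℝ) : EReal) := fun n =>
      energy_pcThree_le a b hab h hsymm hdiag w₁ w₂ y hw₁ hw₂ hy (ε n) (hε0 n) (hε1 n)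
    calc Filter.liminf (fun n => PC.energy h (U n)) atTop
        ≤ Filter.liminf (fun _ => ((max (max (h w₁ y) (h w₂ y)) (h w₁ w₂) : ℝ) : EReal)) atTop :=
          Filter.liminf_le_liminf (Filter.Eventually.of_forall hble)
      _ = _ := Filter.liminf_const _
  exact EReal.coe_le_coe_iff.mp (hge.trans (hmain.trans hlimle))

end ForwardSubmax


theorem lsc_iff_lsc_and_cartesianSubmaximal
    (a b : ℝ) (hab : a < b) (h : ℝ → ℝ → ℝ)
    (hsymm : ∀ ξ η : ℝ, ξ ≠ 0 → η ≠ 0 → h ξ η = h η ξ)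
    (hdiag : ∀ ξ η : ℝ, ξ ≠ 0 → η ≠ 0 →
      h ξ η = max (max (h ξ ξ) (h η η)) (max (h η ξ) (h ξ η))) :
    EnergyLSC a b h ↔
      (LowerSemicontinuousOn (fun p : ℝ × ℝ => h p.1 p.2)
          {p : ℝ × ℝ | p.1 ≠ 0 ∧ p.2 ≠ 0}
        ∧ CartesianSubmaximal h) := by
  constructor
  · intro hE
    exact ⟨lsc_of_energyLSC_s0 a b hab h hsymm hdiag hE,
      submax_of_energyLSC a b hab h hsymm hdiag hE⟩
  · rintro ⟨hlsc, hsub⟩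
    exact energyLSC_of a b hab h hsymm hlsc hsub
end

section
/- Let I=(a,b) be a bounded open interval and let h:(ℝ∖{0})×(ℝ∖{0})→ℝ be symmetric and diagonal. Define H(u)=max over (s,t)∈S(u)×S(u) of h([u](s),[u](t)) for piecewise constant u on I. If H is lower semicontinuous with respect to L¹(I) convergence along piecewise constant functions, then h is lower semicontinuous on (ℝ∖{0})×(ℝ∖{0}): for all w,v ∈ ℝ∖{0} and all sequences wₙ,vₙ ∈ ℝ∖{0} with wₙ→w, vₙ→v, one has h(w,v) ≤ liminf h(wₙ,vₙ). -/
open Filter MeasureTheory Set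

section Aux

/-- A two-jump piecewise constant function with jumps `x` then `y`. -/
noncomputable def mk2 (a b : ℝ) (hab : a < b) (x y : ℝ) (hx : x ≠ 0) (hy : y ≠ 0) :
    PC a b where
  N := 2
  t := ![a, a + (b - a) / 4, a + (b - a) / 2, b]
  v := ![0, x, x + y]
  t_mono := by
    rw [Fin.strictMono_iff_lt_succ]
    intro i
    fin_cases i
    · show a < a + (b - a) / 4; linarith
    · show a + (b - a) / 4 < a + (b - a) / 2; linarith
    · show a + (b - a) / 2 < b; linarith
  t_first := rfl
  t_last := rfl
  v_ne := by
    intro i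
    fin_cases i
    · show (0 : ℝ) ≠ x; exact hx.symm
    · show x ≠ x + y; intro hc; exact hy (by linarith)

lemma mk2_jump0 (a b : ℝ) (hab : a < b) (x y : ℝ) (hx : x ≠ 0) (hy : y ≠ 0)
    (p : 0 < (mk2 a b hab x y hx hy).N) :
    (mk2 a b hab x y hx hy).jump ⟨0, p⟩ = x := by
  show x - 0 = x; ring

lemma mk2_jump1 (a b : ℝ) (hab : a < b) (x y : ℝ) (hx : x ≠ 0) (hy : y ≠ 0)
    (p : 1 < (mk2 a b hab x y hx hy).N) :
    (mk2 a b hab x y hx hy).jump ⟨1, p⟩ = y := by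
  show x + y - x = y; ring

lemma energy_mk2 (a b : ℝ) (hab : a < b) (h : ℝ → ℝ → ℝ)
    (hdiag : ∀ ξ η : ℝ, ξ ≠ 0 → η ≠ 0 →
      h ξ η = max (max (h ξ ξ) (h η η)) (max (h η ξ) (h ξ η)))
    (x y : ℝ) (hx : x ≠ 0) (hy : y ≠ 0) :
    PC.energy h (mk2 a b hab x y hx hy) = ((h x y : ℝ) : EReal) := by
  have hd := hdiag x y hx hy
  have key : ∀ z : ℝ, z ≤ max (max (h x x) (h y y)) (max (h y x) (h x y)) →
      ((z : ℝ) : EReal) ≤ ((h x y : ℝ) : EReal) := by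
    intro z hz
    rw [← hd] at hz
    exact_mod_cast hz
  apply le_antisymm
  · apply iSup₂_le
    intro i j
    rcases i with ⟨i, hi⟩
    rcases j with ⟨j, hj⟩
    have hi2 : i < 2 := hi
    have hj2 : j < 2 := hj
    interval_cases i <;> interval_cases j
    · rw [mk2_jump0]; exact key _ (le_max_of_le_left (le_max_left _ _))
    · rw [mk2_jump0, mk2_jump1]
    · rw [mk2_jump1, mk2_jump0]; exact key _ (le_max_of_le_right (le_max_left _ _))
    · rw [mk2_jump1]; exact key _ (le_max_of_le_left (le_max_right _ _))
  · have p0 : 0 < (mk2 a b hab x y hx hy).N := Nat.zero_lt_two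
    have p1 : 1 < (mk2 a b hab x y hx hy).N := Nat.one_lt_two
    calc ((h x y : ℝ) : EReal)
        = ((h ((mk2 a b hab x y hx hy).jump ⟨0, p0⟩)
            ((mk2 a b hab x y hx hy).jump ⟨1, p1⟩) : ℝ) : EReal) := by
          rw [mk2_jump0, mk2_jump1]
      _ ≤ _ := le_iSup₂ (f := fun i j => ((h ((mk2 a b hab x y hx hy).jump i)
            ((mk2 a b hab x y hx hy).jump j) : ℝ) : EReal)) ⟨0, p0⟩ ⟨1, p1⟩

lemma mk2_toFun (a b : ℝ) (hab : a < b) (x y : ℝ) (hx : x ≠ 0) (hy : y ≠ 0) (z : ℝ) :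
    (mk2 a b hab x y hx hy).toFun z =
      (if a ≤ z ∧ z < a + (b - a) / 4 then (0 : ℝ) else 0)
      + (if a + (b - a) / 4 ≤ z ∧ z < a + (b - a) / 2 then x else 0)
      + (if a + (b - a) / 2 ≤ z ∧ z < b then x + y else 0) := by
  show (∑ i : Fin 3, if (![a, a + (b - a) / 4, a + (b - a) / 2, b] : Fin 4 → ℝ) i.castSucc ≤ z ∧
      z < (![a, a + (b - a) / 4, a + (b - a) / 2, b] : Fin 4 → ℝ) i.succ
      then (![0, x, x + y] : Fin 3 → ℝ) i else 0) = _
  rw [Fin.sum_univ_three]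
  rfl

lemma mk2_sub_bound (a b : ℝ) (hab : a < b) (x y x' y' : ℝ)
    (hx : x ≠ 0) (hy : y ≠ 0) (hx' : x' ≠ 0) (hy' : y' ≠ 0) (z : ℝ) :
    |(mk2 a b hab x' y' hx' hy').toFun z - (mk2 a b hab x y hx hy).toFun z| ≤
      |x' - x| + |x' + y' - (x + y)| := by
  rw [mk2_toFun, mk2_toFun]
  simp only [ite_self, zero_add]
  have e : ∀ (c : Prop) [Decidable c] (p q : ℝ),
      |(if c then p else 0) - (if c then q else 0)| ≤ |p - q| := by
    intro c _ p q; split_ifs <;> simp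
  set B' := if a + (b - a) / 4 ≤ z ∧ z < a + (b - a) / 2 then x' else 0 with hB'
  set B := if a + (b - a) / 4 ≤ z ∧ z < a + (b - a) / 2 then x else 0 with hB
  set C' := if a + (b - a) / 2 ≤ z ∧ z < b then x' + y' else 0 with hC'
  set C := if a + (b - a) / 2 ≤ z ∧ z < b then x + y else 0 with hC
  calc |B' + C' - (B + C)| = |(B' - B) + (C' - C)| := by ring_nf
    _ ≤ |B' - B| + |C' - C| := abs_add_le _ _
    _ ≤ |x' - x| + |x' + y' - (x + y)| := add_le_add (e _ _ _) (e _ _ _)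

end Aux

/-- If `H` is `L¹`-lower semicontinuous on piecewise constant functions, then `h` is
(sequentially) lower semicontinuous on `(ℝ∖{0}) × (ℝ∖{0})`. -/
theorem lsc_of_energyLSC
    (a b : ℝ) (hab : a < b) (h : ℝ → ℝ → ℝ)
    (hsymm : ∀ ξ η : ℝ, ξ ≠ 0 → η ≠ 0 → h ξ η = h η ξ)
    (hdiag : ∀ ξ η : ℝ, ξ ≠ 0 → η ≠ 0 →
      h ξ η = max (max (h ξ ξ) (h η η)) (max (h η ξ) (h ξ η)))
    (hlsc : EnergyLSC a b h) :
    ∀ w v : ℝ, w ≠ 0 → v ≠ 0 → ∀ W V : ℕ → ℝ,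
      (∀ n, W n ≠ 0) → (∀ n, V n ≠ 0) →
      Tendsto W atTop (nhds w) → Tendsto V atTop (nhds v) →
      ((h w v : ℝ) : EReal) ≤
        Filter.liminf (fun n => ((h (W n) (V n) : ℝ) : EReal)) atTop := by
  intro w v hw hv W V hW hV hWt hVt
  set U : ℕ → PC a b := fun n => mk2 a b hab (W n) (V n) (hW n) (hV n) with hU
  have hconv : PC.L1Tendsto U (mk2 a b hab w v hw hv) := by
    unfold PC.L1Tendsto
    have h1 : Tendsto (fun n => |W n - w|) atTop (nhds 0) := by
      have := (hWt.sub (tendsto_const_nhds (x := w))).abs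
      simpa using this
    have h2 : Tendsto (fun n => |W n + V n - (w + v)|) atTop (nhds 0) := by
      have := ((hWt.add hVt).sub (tendsto_const_nhds (x := w + v))).abs
      simpa using this
    have hb : Tendsto (fun n => (|W n - w| + |W n + V n - (w + v)|) * (b - a))
        atTop (nhds 0) := by
      have := (h1.add h2).mul (tendsto_const_nhds (x := b - a))
      simpa using this
    apply squeeze_zero (g := fun n => (|W n - w| + |W n + V n - (w + v)|) * (b - a))
      (fun n => integral_nonneg fun z => abs_nonneg _) _ hb
    intro n
    have hint : IntegrableOn (fun _ : ℝ => |W n - w| + |W n + V n - (w + v)|)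
        (Ioo a b) volume := by
      refine integrableOn_const (ne_of_lt ?_)
      exact measure_Ioo_lt_top
    calc (∫ z in Ioo a b, |(U n).toFun z - (mk2 a b hab w v hw hv).toFun z|)
        ≤ ∫ _z in Ioo a b, (|W n - w| + |W n + V n - (w + v)|) := by
          apply integral_mono_of_nonneg
          · filter_upwards with z using abs_nonneg _
          · exact hint
          · filter_upwards with z using
              mk2_sub_bound a b hab w v (W n) (V n) hw hv (hW n) (hV n) z
      _ = (|W n - w| + |W n + V n - (w + v)|) * (b - a) := by
          rw [setIntegral_const, Real.volume_real_Ioo_of_le (by linarith),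
            smul_eq_mul, mul_comm]
  have hmain := hlsc U (mk2 a b hab w v hw hv) hconv
  rw [energy_mk2 a b hab h hdiag w v hw hv] at hmain
  have heq : (fun n => PC.energy h (U n)) =
      fun n => ((h (W n) (V n) : ℝ) : EReal) :=
    funext fun n => energy_mk2 a b hab h hdiag (W n) (V n) (hW n) (hV n)
  rw [heq] at hmain
  exact hmain
end

section
/- Let I=(a,b) be a bounded open interval and let h:(ℝ∖{0})×(ℝ∖{0})→ℝ be symmetric and diagonal. Define H(u)=max over (s,t)∈S(u)×S(u) of h([u](s),[u](t)) for piecewise constant u on I. If H is lower semicontinuous with respect to L¹(I) convergence along piecewise constant functions, then h is Cartesian submaximal: h(y, w₁+w₂) ≤ max{h(y,w₁), h(y,w₂), h(w₁,w₂)} for all y,w₁,w₂ ∈ ℝ∖{0} with w₁+w₂ ≠ 0. -/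
open Filter MeasureTheory Set

section Aux

lemma cs2 : (Fin.castSucc 2 : Fin 4) = 2 := rfl
lemma cs2' : (Fin.castSucc 2 : Fin 5) = 2 := rfl
lemma cs3' : (Fin.castSucc 3 : Fin 5) = 3 := rfl

noncomputable def pc2 (a b y w : ℝ) (hab : a < b) (hy : y ≠ 0) (hw : w ≠ 0) : PC a b where
  N := 2
  t := ![a, a + (b-a)/3, a + 2*(b-a)/3, b]
  v := ![0, y, y + w]
  t_mono := by
    rw [Fin.strictMono_iff_lt_succ]
    intro i
    fin_cases i <;> simp [cs2] <;> linarith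
  t_first := rfl
  t_last := rfl
  v_ne := by
    intro i
    fin_cases i <;> simp [sub_ne_zero] <;> intro hc <;> [exact hy hc.symm; exact hw (by linarith)]

lemma pc2_toFun (a b y w : ℝ) (hab : a < b) (hy : y ≠ 0) (hw : w ≠ 0) (x : ℝ) :
    (pc2 a b y w hab hy hw).toFun x =
      (if a + (b-a)/3 ≤ x ∧ x < a + 2*(b-a)/3 then y else 0)
      + (if a + 2*(b-a)/3 ≤ x ∧ x < b then y + w else 0) := by
  show (∑ i : Fin 3, if (![a, a + (b-a)/3, a + 2*(b-a)/3, b] : Fin 4 → ℝ) i.castSucc ≤ x ∧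
      x < (![a, a + (b-a)/3, a + 2*(b-a)/3, b] : Fin 4 → ℝ) i.succ then (![0, y, y + w] : Fin 3 → ℝ) i
      else 0) = _
  rw [Fin.sum_univ_three, Matrix.cons_val_zero, ite_self, zero_add]
  simp [PC.toFun, pc2, Fin.sum_univ_three, cs2]
  rfl

noncomputable def pc3 (a b y w₁ w₂ ε : ℝ) (hab : a < b) (hε : 0 < ε) (hε2 : ε < (b-a)/3)
    (hy : y ≠ 0) (h1 : w₁ ≠ 0) (h2 : w₂ ≠ 0) : PC a b where
  N := 3
  t := ![a, a + (b-a)/3, a + 2*(b-a)/3 - ε, a + 2*(b-a)/3, b]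
  v := ![0, y, y + w₁, y + w₁ + w₂]
  t_mono := by
    rw [Fin.strictMono_iff_lt_succ]
    intro i
    fin_cases i <;> simp [cs2', cs3'] <;> linarith
  t_first := rfl
  t_last := rfl
  v_ne := by
    intro i
    fin_cases i <;> simp [cs2, sub_ne_zero] <;> intro hc <;>
      [exact hy hc.symm; exact h1 (by linarith); exact h2 (by linarith)]

lemma pc3_toFun (a b y w₁ w₂ ε : ℝ) (hab : a < b) (hε : 0 < ε) (hε2 : ε < (b-a)/3)
    (hy : y ≠ 0) (h1 : w₁ ≠ 0) (h2 : w₂ ≠ 0) (x : ℝ) :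
    (pc3 a b y w₁ w₂ ε hab hε hε2 hy h1 h2).toFun x =
      (if a + (b-a)/3 ≤ x ∧ x < a + 2*(b-a)/3 - ε then y else 0)
      + (if a + 2*(b-a)/3 - ε ≤ x ∧ x < a + 2*(b-a)/3 then y + w₁ else 0)
      + (if a + 2*(b-a)/3 ≤ x ∧ x < b then y + w₁ + w₂ else 0) := by
  show (∑ i : Fin 4, if (![a, a + (b-a)/3, a + 2*(b-a)/3 - ε, a + 2*(b-a)/3, b] : Fin 5 → ℝ) i.castSucc ≤ x ∧
      x < (![a, a + (b-a)/3, a + 2*(b-a)/3 - ε, a + 2*(b-a)/3, b] : Fin 5 → ℝ) i.succ then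
      (![0, y, y + w₁, y + w₁ + w₂] : Fin 4 → ℝ) i else 0) = _
  rw [Fin.sum_univ_four, Matrix.cons_val_zero, ite_self, zero_add]
  simp [PC.toFun, pc3, Fin.sum_univ_four, cs2', cs3', add_assoc]

lemma pc_key (a b y w₁ w₂ ε : ℝ) (hab : a < b) (hε : 0 < ε) (hε2 : ε < (b-a)/3)
    (hy : y ≠ 0) (h1 : w₁ ≠ 0) (h2 : w₂ ≠ 0) (hww : w₁ + w₂ ≠ 0) (x : ℝ) :
    (pc3 a b y w₁ w₂ ε hab hε hε2 hy h1 h2).toFun x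
      - (pc2 a b y (w₁ + w₂) hab hy hww).toFun x =
      if a + 2*(b-a)/3 - ε ≤ x ∧ x < a + 2*(b-a)/3 then w₁ else 0 := by
  rw [pc2_toFun, pc3_toFun]
  split_ifs <;>
    first
      | ring1
      | (exfalso; simp (failIfUnchanged := false) only [not_and_or, not_le, not_lt] at *;
         casesm* _ ∨ _, _ ∧ _ <;> linarith)

lemma pc2_jump (a b y w : ℝ) (hab : a < b) (hy : y ≠ 0) (hw : w ≠ 0) :
    (pc2 a b y w hab hy hw).jump = ![y, w] := by
  funext i
  fin_cases i <;> simp [PC.jump, pc2] <;> ring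

lemma pc3_jump (a b y w₁ w₂ ε : ℝ) (hab : a < b) (hε : 0 < ε) (hε2 : ε < (b-a)/3)
    (hy : y ≠ 0) (h1 : w₁ ≠ 0) (h2 : w₂ ≠ 0) :
    (pc3 a b y w₁ w₂ ε hab hε hε2 hy h1 h2).jump = ![y, w₁, w₂] := by
  funext i
  fin_cases i <;> simp [PC.jump, pc3, cs2] <;> ring

lemma pc_integral (a b y w₁ w₂ ε : ℝ) (hab : a < b) (hε : 0 < ε) (hε2 : ε < (b-a)/3)
    (hy : y ≠ 0) (h1 : w₁ ≠ 0) (h2 : w₂ ≠ 0) (hww : w₁ + w₂ ≠ 0) :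
    ∫ x in Ioo a b, |(pc3 a b y w₁ w₂ ε hab hε hε2 hy h1 h2).toFun x
      - (pc2 a b y (w₁ + w₂) hab hy hww).toFun x| = ε * |w₁| := by
  set l := a + 2*(b-a)/3 - ε with hl
  set r := a + 2*(b-a)/3 with hr
  have hal : a < l := by rw [hl, hr]; linarith
  have hlr : l < r := by rw [hl, hr]; linarith
  have hrb : r < b := by rw [hr]; linarith
  have h1' : ∀ x : ℝ, |(pc3 a b y w₁ w₂ ε hab hε hε2 hy h1 h2).toFun x
      - (pc2 a b y (w₁ + w₂) hab hy hww).toFun x|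
      = (Ico l r).indicator (fun _ => |w₁|) x := by
    intro x
    rw [pc_key a b y w₁ w₂ ε hab hε hε2 hy h1 h2 hww x]
    by_cases hc : l ≤ x ∧ x < r
    · rw [if_pos hc, indicator_of_mem (mem_Ico.mpr hc)]
    · rw [if_neg hc, indicator_of_notMem (fun hm => hc (mem_Ico.mp hm)), abs_zero]
  calc ∫ x in Ioo a b, |(pc3 a b y w₁ w₂ ε hab hε hε2 hy h1 h2).toFun x
        - (pc2 a b y (w₁ + w₂) hab hy hww).toFun x|
      = ∫ x in Ioo a b, (Ico l r).indicator (fun _ => |w₁|) x := by simp only [h1']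
    _ = ∫ _x in Ioo a b ∩ Ico l r, |w₁| := setIntegral_indicator measurableSet_Ico
    _ = ∫ _x in Ico l r, |w₁| := by
        rw [inter_eq_self_of_subset_right]
        intro x hx
        exact ⟨lt_of_lt_of_le hal hx.1, lt_trans hx.2 hrb⟩
    _ = ε * |w₁| := by
        rw [setIntegral_const, Real.volume_real_Ico, max_eq_left (by linarith), smul_eq_mul,
          hl, hr]
        ring

lemma pc2_energy (h : ℝ → ℝ → ℝ) (a b y w : ℝ) (hab : a < b) (hy : y ≠ 0) (hw : w ≠ 0) :
    PC.energy h (pc2 a b y w hab hy hw)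
      = ⨆ (i : Fin 2) (j : Fin 2), ((h (![y, w] i) (![y, w] j) : ℝ) : EReal) := by
  rw [PC.energy, pc2_jump]; rfl

lemma pc3_energy (h : ℝ → ℝ → ℝ) (a b y w₁ w₂ ε : ℝ) (hab : a < b) (hε : 0 < ε)
    (hε2 : ε < (b-a)/3) (hy : y ≠ 0) (h1 : w₁ ≠ 0) (h2 : w₂ ≠ 0) :
    PC.energy h (pc3 a b y w₁ w₂ ε hab hε hε2 hy h1 h2)
      = ⨆ (i : Fin 3) (j : Fin 3), ((h (![y, w₁, w₂] i) (![y, w₁, w₂] j) : ℝ) : EReal) := by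
  rw [PC.energy, pc3_jump]; rfl

end Aux

/-- If `H` is `L¹`-lower semicontinuous on piecewise constant functions, then `h` is
Cartesian submaximal. -/
theorem cartesianSubmaximal_of_energyLSC
    (a b : ℝ) (hab : a < b) (h : ℝ → ℝ → ℝ)
    (hsymm : ∀ ξ η : ℝ, ξ ≠ 0 → η ≠ 0 → h ξ η = h η ξ)
    (hdiag : ∀ ξ η : ℝ, ξ ≠ 0 → η ≠ 0 →
      h ξ η = max (max (h ξ ξ) (h η η)) (max (h η ξ) (h ξ η)))
    (hlsc : EnergyLSC a b h) :
    ∀ y w₁ w₂ : ℝ, y ≠ 0 → w₁ ≠ 0 → w₂ ≠ 0 → w₁ + w₂ ≠ 0 →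
      h y (w₁ + w₂) ≤ max (max (h y w₁) (h y w₂)) (h w₁ w₂) := by
  intro y w₁ w₂ hy h1 h2 hww
  have hba : (0:ℝ) < b - a := by linarith
  have hεpos : ∀ n : ℕ, (0:ℝ) < (b-a)/(3*((n:ℝ)+2)) := by
    intro n
    apply div_pos hba
    positivity
  have hεlt : ∀ n : ℕ, (b-a)/(3*((n:ℝ)+2)) < (b-a)/3 := by
    intro n
    apply div_lt_div_of_pos_left hba (by norm_num)
    have : (0:ℝ) ≤ (n:ℝ) := Nat.cast_nonneg n
    linarith
  have htend : PC.L1Tendsto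
      (fun n => pc3 a b y w₁ w₂ ((b-a)/(3*((n:ℝ)+2))) hab (hεpos n) (hεlt n) hy h1 h2)
      (pc2 a b y (w₁ + w₂) hab hy hww) := by
    unfold PC.L1Tendsto
    have heq : (fun n : ℕ => ∫ x in Ioo a b,
        |(pc3 a b y w₁ w₂ ((b-a)/(3*((n:ℝ)+2))) hab (hεpos n) (hεlt n) hy h1 h2).toFun x
          - (pc2 a b y (w₁ + w₂) hab hy hww).toFun x|)
        = fun n : ℕ => (b-a)/(3*((n:ℝ)+2)) * |w₁| := by
      funext n
      exact pc_integral a b y w₁ w₂ _ hab (hεpos n) (hεlt n) hy h1 h2 hww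
    rw [heq]
    have hden : Tendsto (fun n : ℕ => 3*((n:ℝ)+2)) atTop atTop := by
      apply Tendsto.const_mul_atTop (by norm_num : (0:ℝ) < 3)
      exact tendsto_atTop_add_const_right _ _ tendsto_natCast_atTop_atTop
    have := Filter.Tendsto.div_atTop
      (tendsto_const_nhds (x := (b-a) * |w₁|) (f := atTop)) hden
    convert this using 2 with n
    ring
  have hmain := hlsc _ _ htend
  -- lower bound for the limit energy
  have hlb : ((h y (w₁ + w₂) : ℝ) : EReal) ≤ PC.energy h (pc2 a b y (w₁ + w₂) hab hy hww) := by
    rw [pc2_energy]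
    exact le_iSup₂ (f := fun (i : Fin 2) (j : Fin 2) =>
      ((h (![y, w₁ + w₂] i) (![y, w₁ + w₂] j) : ℝ) : EReal)) 0 1
  -- pointwise bound on approximate energies
  have key1 : h y y ≤ h y w₁ := by
    rw [hdiag y w₁ hy h1]; exact le_max_of_le_left (le_max_left _ _)
  have key2 : h w₁ w₁ ≤ h w₁ w₂ := by
    rw [hdiag w₁ w₂ h1 h2]; exact le_max_of_le_left (le_max_left _ _)
  have key3 : h w₂ w₂ ≤ h w₁ w₂ := by
    rw [hdiag w₁ w₂ h1 h2]; exact le_max_of_le_left (le_max_right _ _)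
  have hmat : ∀ i j : Fin 3, h (![y, w₁, w₂] i) (![y, w₁, w₂] j)
      ≤ max (max (h y w₁) (h y w₂)) (h w₁ w₂) := by
    have s1 : h w₁ y = h y w₁ := hsymm w₁ y h1 hy
    have s2 : h w₂ y = h y w₂ := hsymm w₂ y h2 hy
    have s3 : h w₂ w₁ = h w₁ w₂ := hsymm w₂ w₁ h2 h1
    intro i j
    fin_cases i <;> fin_cases j
    · exact le_trans key1 (le_max_of_le_left (le_max_left _ _))
    · exact le_max_of_le_left (le_max_left _ _)
    · exact le_max_of_le_left (le_max_right _ _)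
    · show h w₁ y ≤ _
      rw [s1]; exact le_max_of_le_left (le_max_left _ _)
    · exact le_trans key2 (le_max_right _ _)
    · exact le_max_right _ _
    · show h w₂ y ≤ _
      rw [s2]; exact le_max_of_le_left (le_max_right _ _)
    · show h w₂ w₁ ≤ _
      rw [s3]; exact le_max_right _ _
    · exact le_trans key3 (le_max_right _ _)
  have hub : ∀ n : ℕ, PC.energy h
      (pc3 a b y w₁ w₂ ((b-a)/(3*((n:ℝ)+2))) hab (hεpos n) (hεlt n) hy h1 h2)
      ≤ ((max (max (h y w₁) (h y w₂)) (h w₁ w₂) : ℝ) : EReal) := by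
    intro n
    rw [pc3_energy]
    exact iSup₂_le fun i j => EReal.coe_le_coe_iff.mpr (hmat i j)
  have hliminf : Filter.liminf (fun n : ℕ => PC.energy h
      (pc3 a b y w₁ w₂ ((b-a)/(3*((n:ℝ)+2))) hab (hεpos n) (hεlt n) hy h1 h2)) atTop
      ≤ ((max (max (h y w₁) (h y w₂)) (h w₁ w₂) : ℝ) : EReal) := by
    have := liminf_le_liminf (f := (atTop : Filter ℕ)) (u := fun n : ℕ => PC.energy h
      (pc3 a b y w₁ w₂ ((b-a)/(3*((n:ℝ)+2))) hab (hεpos n) (hεlt n) hy h1 h2))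
      (v := fun _ : ℕ => ((max (max (h y w₁) (h y w₂)) (h w₁ w₂) : ℝ) : EReal))
      (Eventually.of_forall hub)
    simpa using this
  exact EReal.coe_le_coe_iff.mp (le_trans hlb (le_trans hmain hliminf))
end

section
/- The function h:{(x,y) ∈ ℝ×ℝ : x+y ≠ 0} → ℝ defined by h(x,y)=|sin(x+y)|/(x+y) is not Cartesian submaximal: for x=y=w=π/2 one has h(x+y, w) = 2/(3π) > 0 = max{h(x,w), h(y,w), h(x,y)}. -/
open Real

/-- The function `h(x,y) = |sin(x+y)|/(x+y)` is not Cartesian submaximal: for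
`x = y = w = π/2` one has `h(x+y, w) = 2/(3π) > 0 = max {h(x,w), h(y,w), h(x,y)}`. -/
theorem sin_quotient_not_cartesianSubmaximal
    (h : ℝ → ℝ → ℝ)
    (h_def : ∀ x y : ℝ, h x y = |Real.sin (x + y)| / (x + y)) :
    h (π / 2 + π / 2) (π / 2) = 2 / (3 * π) ∧
    (0 : ℝ) < 2 / (3 * π) ∧
    max (max (h (π / 2) (π / 2)) (h (π / 2) (π / 2))) (h (π / 2) (π / 2)) = 0 := by
  have hpi := Real.pi_pos
  have h1 : h (π / 2 + π / 2) (π / 2) = 2 / (3 * π) := by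
    rw [h_def]
    have : π / 2 + π / 2 + π / 2 = π + π / 2 := by ring
    rw [this, Real.sin_add_pi_div_two, Real.cos_pi]
    rw [abs_neg, abs_one]
    field_simp
    ring
  have h2 : h (π / 2) (π / 2) = 0 := by
    rw [h_def]
    have : π / 2 + π / 2 = π := by ring
    rw [this, Real.sin_pi, abs_zero, zero_div]
  refine ⟨h1, by positivity, by rw [h2]; simp⟩
end

section
/- The function g:(0,∞)→ℝ defined by g(x)=|sin x|/x is submaximal: g(x+y) ≤ max{g(x), g(y)} for all x,y > 0. -/
lemma mediant_le_max {a b x y : ℝ} (ha : 0 ≤ a) (hb : 0 ≤ b)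
    (hx : 0 < x) (hy : 0 < y) : (a + b) / (x + y) ≤ max (a / x) (b / y) := by
  rcases le_total (a / x) (b / y) with h | h
  · rw [max_eq_right h]
    rw [div_le_div_iff₀ (by linarith) hy] at *
    nlinarith
  · rw [max_eq_left h]
    rw [div_le_div_iff₀ (by linarith) hx] at *
    nlinarith

/-- The function `g(x) = |sin x| / x` is submaximal on `(0, ∞)`. -/
theorem sin_quotient_submaximal :
    ∀ x y : ℝ, 0 < x → 0 < y →
      |Real.sin (x + y)| / (x + y) ≤ max (|Real.sin x| / x) (|Real.sin y| / y) := by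
  intro x y hx hy
  have h : |Real.sin (x + y)| ≤ |Real.sin x| + |Real.sin y| := by
    rw [Real.sin_add]
    calc |Real.sin x * Real.cos y + Real.cos x * Real.sin y|
        ≤ |Real.sin x * Real.cos y| + |Real.cos x * Real.sin y| := abs_add_le _ _
      _ ≤ |Real.sin x| + |Real.sin y| := by
          rw [abs_mul, abs_mul]
          gcongr
          · exact mul_le_of_le_one_right (abs_nonneg _)
              (Real.abs_cos_le_one y)
          · exact mul_le_of_le_one_left (abs_nonneg _)
              (Real.abs_cos_le_one x)
  calc |Real.sin (x + y)| / (x + y) ≤ (|Real.sin x| + |Real.sin y|) / (x + y) := by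
        gcongr
      _ ≤ _ := mediant_le_max (abs_nonneg _) (abs_nonneg _) hx hy
end

section
/- Define h:ℝ×ℝ→[0,+∞] by h(w,y)=max{|sin w|/w, |sin y|/y} if w>0 and y>0, h(w,y)=0 if w=0 or y=0, and h(w,y)=+∞ otherwise. Then h is separately submaximal: h(y, w₁+w₂) ≤ max{h(y,w₁), h(y,w₂)} for all y,w₁,w₂ ∈ ℝ, and consequently (being symmetric) Cartesian submaximal: h(w₁+w₂,y) ≤ max{h(w₁,y), h(w₂,y), h(w₁,w₂)} for all y,w₁,w₂ ∈ ℝ. -/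
lemma key_sin_quot (a b : ℝ) (ha : 0 < a) (hb : 0 < b) :
    |Real.sin (a + b)| / (a + b) ≤ max (|Real.sin a| / a) (|Real.sin b| / b) := by
  set m := max (|Real.sin a| / a) (|Real.sin b| / b) with hm
  have hab : 0 < a + b := by linarith
  rw [div_le_iff₀ hab]
  have h1 : |Real.sin a| ≤ m * a := by
    have h := le_max_left (|Real.sin a| / a) (|Real.sin b| / b)
    calc |Real.sin a| = (|Real.sin a| / a) * a := by field_simp
      _ ≤ m * a := mul_le_mul_of_nonneg_right h ha.le
  have h2 : |Real.sin b| ≤ m * b := by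
    have h := le_max_right (|Real.sin a| / a) (|Real.sin b| / b)
    calc |Real.sin b| = (|Real.sin b| / b) * b := by field_simp
      _ ≤ m * b := mul_le_mul_of_nonneg_right h hb.le
  have h3 : |Real.sin (a + b)| ≤ |Real.sin a| + |Real.sin b| := by
    rw [Real.sin_add]
    calc |Real.sin a * Real.cos b + Real.cos a * Real.sin b|
        ≤ |Real.sin a * Real.cos b| + |Real.cos a * Real.sin b| := abs_add_le _ _
      _ ≤ |Real.sin a| * 1 + 1 * |Real.sin b| := by
          rw [abs_mul, abs_mul]
          gcongr
          · exact Real.abs_cos_le_one b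
          · exact Real.abs_cos_le_one a
      _ = |Real.sin a| + |Real.sin b| := by ring
  nlinarith

/-- The function `h(w,y) = max {|sin w|/w, |sin y|/y}` on `(0,∞) × (0,∞)`, extended by
`0` when `w = 0` or `y = 0` and by `+∞` otherwise, is separately submaximal and
(being symmetric) Cartesian submaximal. -/
theorem max_sin_quotient_submaximal
    (h : ℝ → ℝ → EReal)
    (h_def : ∀ w y : ℝ, h w y =
      if 0 < w ∧ 0 < y then
        ((max (|Real.sin w| / w) (|Real.sin y| / y) : ℝ) : EReal)
      else if w = 0 ∨ y = 0 then 0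
      else ⊤) :
    (∀ y w₁ w₂ : ℝ, h y (w₁ + w₂) ≤ max (h y w₁) (h y w₂)) ∧
    (∀ y w₁ w₂ : ℝ, h (w₁ + w₂) y ≤ max (max (h w₁ y) (h w₂ y)) (h w₁ w₂)) := by
  have hnn : ∀ w y : ℝ, (0 : EReal) ≤ h w y := by
    intro w y
    rw [h_def]
    split_ifs with h1 h2
    · exact_mod_cast le_max_of_le_left (div_nonneg (abs_nonneg _) h1.1.le)
    · exact le_refl _
    · exact le_top
  have hsymm : ∀ w y : ℝ, h w y = h y w := by
    intro w y
    rw [h_def, h_def]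
    simp only [and_comm, or_comm, max_comm]
  have sep : ∀ y w₁ w₂ : ℝ, h y (w₁ + w₂) ≤ max (h y w₁) (h y w₂) := by
    intro y w₁ w₂
    rcases eq_or_ne (w₁ + w₂) 0 with hs | hs
    · rw [h_def]
      have : ¬ (0 < y ∧ 0 < w₁ + w₂) := by rintro ⟨_, h'⟩; rw [hs] at h'; exact lt_irrefl 0 h'
      rw [if_neg this, if_pos (Or.inr hs)]
      exact le_max_of_le_left (hnn y w₁)
    · rcases lt_trichotomy y 0 with hy | hy | hy
      · -- y < 0 : h y x = ⊤ unless x = 0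
        have hne1 : w₁ ≠ 0 ∨ w₂ ≠ 0 := by
          by_contra hc
          push_neg at hc
          exact hs (by rw [hc.1, hc.2, add_zero])
        have htop : ∀ x : ℝ, x ≠ 0 → h y x = ⊤ := by
          intro x hx
          rw [h_def, if_neg (by rintro ⟨h', _⟩; linarith), if_neg (by
            rintro (h' | h') <;> [exact hy.ne h'; exact hx h'])]
        rcases hne1 with hne | hne
        · exact le_max_of_le_left (by rw [htop w₁ hne]; exact le_top)
        · exact le_max_of_le_right (by rw [htop w₂ hne]; exact le_top)
      · -- y = 0
        rw [h_def, if_neg (by rintro ⟨h', _⟩; rw [hy] at h'; exact lt_irrefl 0 h'),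
          if_pos (Or.inl hy)]
        exact le_max_of_le_left (hnn y w₁)
      · -- y > 0
        rcases lt_trichotomy (w₁ + w₂) 0 with hw | hw | hw
        · have hne : w₁ < 0 ∨ w₂ < 0 := by by_contra hc; push_neg at hc; linarith [hc.1, hc.2]
          have htop : ∀ x : ℝ, x < 0 → h y x = ⊤ := by
            intro x hx
            rw [h_def, if_neg (by rintro ⟨_, h'⟩; linarith), if_neg (by
              rintro (h' | h') <;> [exact hy.ne' h'; exact hx.ne h'])]
          rcases hne with hne | hne
          · exact le_max_of_le_left (by rw [htop w₁ hne]; exact le_top)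
          · exact le_max_of_le_right (by rw [htop w₂ hne]; exact le_top)
        · exact absurd hw hs
        · -- w₁ + w₂ > 0
          rcases le_or_gt w₁ 0 with hw1 | hw1
          · rcases eq_or_lt_of_le hw1 with h0 | h0
            ·
              have : w₁ + w₂ = w₂ := by rw [h0, zero_add]
              rw [this]
              exact le_max_right _ _
            · have : h y w₁ = ⊤ := by
                rw [h_def, if_neg (by rintro ⟨_, h'⟩; linarith), if_neg (by
                  rintro (h' | h') <;> [exact hy.ne' h'; exact h0.ne h'])]
              exact le_max_of_le_left (by rw [this]; exact le_top)
          · rcases le_or_gt w₂ 0 with hw2 | hw2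
            · rcases eq_or_lt_of_le hw2 with h0 | h0
              · have : w₁ + w₂ = w₁ := by rw [h0, add_zero]
                rw [this]
                exact le_max_left _ _
              · have : h y w₂ = ⊤ := by
                  rw [h_def, if_neg (by rintro ⟨_, h'⟩; linarith), if_neg (by
                    rintro (h' | h') <;> [exact hy.ne' h'; exact h0.ne h'])]
                exact le_max_of_le_right (by rw [this]; exact le_top)
            · -- all positive: the real content
              rw [h_def, h_def, h_def, if_pos ⟨hy, hw⟩, if_pos ⟨hy, hw1⟩, if_pos ⟨hy, hw2⟩]
              rw [show ((max (|Real.sin y| / y) (|Real.sin w₁| / w₁) : ℝ) : EReal) ⊔ ((max (|Real.sin y| / y) (|Real.sin w₂| / w₂) : ℝ) : EReal) = ((max (max (|Real.sin y| / y) (|Real.sin w₁| / w₁)) (max (|Real.sin y| / y) (|Real.sin w₂| / w₂)) : ℝ) : EReal) from by norm_cast, EReal.coe_le_coe_iff]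
              have hk := key_sin_quot w₁ w₂ hw1 hw2
              rw [max_comm (max _ _)]
              rcases max_cases (|Real.sin y| / y) (|Real.sin (w₁ + w₂)| / (w₁ + w₂)) with
                ⟨he, _⟩ | ⟨he, _⟩ <;> rw [he]
              · exact le_max_of_le_right (le_max_left _ _)
              · rcases le_max_iff.mp hk with hk' | hk'
                · exact le_max_of_le_right (le_max_of_le_right hk')
                · exact le_max_of_le_left (le_max_of_le_right hk')
  refine ⟨sep, fun y w₁ w₂ => ?_⟩
  rw [hsymm (w₁ + w₂) y]
  calc h y (w₁ + w₂) ≤ max (h y w₁) (h y w₂) := sep y w₁ w₂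
    _ = max (h w₁ y) (h w₂ y) := by rw [hsymm y w₁, hsymm y w₂]
    _ ≤ max (max (h w₁ y) (h w₂ y)) (h w₁ w₂) := le_max_left _ _
end
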